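/- Let F = ᵗ(f_1,…,f_n) be a vector-valued modular form of weight k whose modular Wronskian W(F) = det(F, DF, …, D^{n−1}F) is nonzero. Then W(F) is a holomorphic scalar modular form for SL_2(Z) of weight n(n+k−1). -/

import Mathlib

open Matrix

/-- The Möbius action of an integral 2×2 matrix on a point of the upper half-plane. -/
noncomputable def moeb (g : Matrix (Fin 2) (Fin 2) ℤ) (z : ℂ) : ℂ :=
  ((g 0 0 : ℂ) * z + (g 0 1 : ℂ)) / ((g 1 0 : ℂ) * z + (g 1 1 : ℂ))

/-- The automorphy factor `cz + d`. -/
noncomputable def jfac (g : Matrix (Fin 2) (Fin 2) ℤ) (z : ℂ) : ℂ :=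
  (g 1 0 : ℂ) * z + (g 1 1 : ℂ)

/-- `E₂` as a function of `q`. -/
noncomputable def E2q (q : ℂ) : ℂ :=
  1 - 24 * ∑' n : ℕ, ((ArithmeticFunction.sigma 1 (n+1) : ℕ) : ℂ) * q ^ (n+1)

/-- `E₂` as a function of `τ` in the upper half-plane, via `q = e^{2πiτ}`. -/
noncomputable def E2tau (τ : ℂ) : ℂ := E2q (Complex.exp (2 * Real.pi * Complex.I * τ))

/-- The modular (Serre) derivative in weight `j`:
`D_j f = (2πi)⁻¹ f' − (j/12) E₂ f`, mapping weight-`j` forms to weight-`j+2` forms. -/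
noncomputable def serreD (j : ℤ) (f : ℂ → ℂ) : ℂ → ℂ :=
  fun τ => (2 * Real.pi * Complex.I)⁻¹ * deriv f τ - ((j : ℂ) / 12) * E2tau τ * f τ

/-- Iterated modular derivative `D^m` applied componentwise to a weight-`k` vector-valued
modular form. -/
noncomputable def iterD (k : ℤ) (n : ℕ) (F : Fin n → ℂ → ℂ) : ℕ → Fin n → ℂ → ℂ
  | 0 => F
  | (m+1) => fun i => serreD (k + 2 * (m : ℤ)) (iterD k n F m i)

/-- The modular Wronskian `W(F) = det(F, DF, …, D^{n−1}F)`. -/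
noncomputable def modWronskian (k : ℤ) (n : ℕ) (F : Fin n → ℂ → ℂ) : ℂ → ℂ :=
  fun τ => Matrix.det (Matrix.of fun i m : Fin n => iterD k n F (m : ℕ) i τ)

/-!
Each column `D^m F` of the modular Wronskian equals `(2πi)^{-m} F^{(m)}` plus a combination,
with coefficients holomorphic on the upper half-plane and independent of the component, of the
lower derivatives `F^{(l)}`, `l < m`. Hence `W(F)` is a constant multiple of the ordinary
Wronskian `Wr(F) = det(F, F', …, F^{(n-1)})`. The same triangular bookkeeping gives the chain
rule `Wr(F ∘ γ) = (γ')^{n(n-1)/2} · Wr(F) ∘ γ` and the scaling law `Wr(j^k G) = j^{kn} Wr(G)`,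
while `Wr(ρ(γ) F) = det ρ(γ) · Wr(F) = Wr(F)`. As `γ' = j^{-2}`, comparing the two expressions for
`Wr(F ∘ γ)` gives the weight `n(n-1) + kn = n(n+k-1)`. Holomorphy is that of a polynomial in
holomorphic functions, and boundedness at `i∞` follows from Cauchy's estimates for the
derivatives of the bounded `F_i`.
-/

open Finset Set
open UpperHalfPlane (upperHalfPlaneSet isOpen_upperHalfPlaneSet)

theorem Matrix.det_eq_det_mul_prod_of_triangular_expansion {R : Type*} [CommRing R] {n : ℕ}
    (A : Matrix (Fin n) (Fin n) R) (x : Fin n → ℕ → R) (c : ℕ → ℕ → R)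
    (hc : ∀ m l, m < l → c m l = 0) (hA : ∀ i m, A i m = ∑ l ∈ range (m + 1), c m l * x i l) :
    A.det = (Matrix.of fun i (l : Fin n) => x i l).det * ∏ m : Fin n, c m m := by
  have hAmul :
      A = (Matrix.of fun i (l : Fin n) => x i l) * Matrix.of fun (l m : Fin n) => c m l := by
    ext i m
    simp only [hA, Matrix.mul_apply, Matrix.of_apply]
    rw [Fin.sum_univ_eq_sum_range (fun l => x i l * c m l) n,
      sum_subset (range_subset_range.2 m.isLt)]
    · exact sum_congr rfl fun l _ => mul_comm _ _
    · intro l _ hl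
      rw [hc m l (by simpa using hl), zero_mul]
  rw [hAmul, Matrix.det_mul, Matrix.det_of_isUpperTriangular
    (M := Matrix.of fun (l m : Fin n) => c m l) fun l m hlt => hc m l hlt]
  rfl

theorem Fin.prod_pow_mul_eq_pow_choose_two_mul_pow (n : ℕ) {M : Type*} [CommMonoid M] (a b : M) :
    ∏ m : Fin n, a ^ (m : ℕ) * b = a ^ n.choose 2 * b ^ n := by
  rw [prod_mul_distrib, prod_const, Fin.prod_univ_eq_prod_range (a ^ ·),
    prod_pow_eq_pow_sum, sum_range_id, Nat.choose_two_right]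

section TriangularExpansion

variable {U : Set ℂ} {α e w : ℂ → ℂ} {β : ℕ → ℂ → ℂ}

/-- The coefficients forced by the recursion `H (m+1) = α H m' + β m H m`, `H 0 = w X 0`, when
`X l' = e X (l+1)`: then `H m = ∑_{l ≤ m} expansionCoeff α β e w m l • X l`. -/
noncomputable def expansionCoeff (α : ℂ → ℂ) (β : ℕ → ℂ → ℂ) (e w : ℂ → ℂ) : ℕ → ℕ → ℂ → ℂ
  | 0, 0 => w
  | 0, _ + 1 => 0
  | m + 1, 0 => α * deriv (expansionCoeff α β e w m 0) + β m * expansionCoeff α β e w m 0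
  | m + 1, l + 1 =>
      α * (deriv (expansionCoeff α β e w m (l + 1)) + e * expansionCoeff α β e w m l)
        + β m * expansionCoeff α β e w m (l + 1)

theorem expansionCoeff_eq_zero_of_lt {m l : ℕ} (h : m < l) : expansionCoeff α β e w m l = 0 := by
  induction m generalizing l with
  | zero => obtain ⟨l, rfl⟩ := Nat.exists_eq_add_of_lt h; rfl
  | succ m ih =>
    obtain ⟨l, rfl⟩ := Nat.exists_eq_add_of_lt (Nat.zero_lt_of_lt h)
    simp [expansionCoeff, ih (l := l + 1) (by omega), ih (l := l) (by omega)]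

theorem expansionCoeff_self (m : ℕ) : expansionCoeff α β e w m m = (α * e) ^ m * w := by
  induction m with
  | zero => simp [expansionCoeff]
  | succ m ih =>
    simp only [expansionCoeff, ih, expansionCoeff_eq_zero_of_lt (Nat.lt_succ_self m), deriv_zero]
    ring

theorem differentiableOn_expansionCoeff (hU : IsOpen U) (hα : DifferentiableOn ℂ α U)
    (hβ : ∀ m, DifferentiableOn ℂ (β m) U) (he : DifferentiableOn ℂ e U)
    (hw : DifferentiableOn ℂ w U) (m l : ℕ) :
    DifferentiableOn ℂ (expansionCoeff α β e w m l) U := by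
  induction m generalizing l with
  | zero => cases l with
    | zero => exact hw
    | succ l => exact differentiableOn_const 0
  | succ m ih => cases l with
    | zero => exact (hα.mul ((ih 0).deriv hU)).add ((hβ m).mul (ih 0))
    | succ l =>
      exact (hα.mul (((ih (l + 1)).deriv hU).add (he.mul (ih l)))).add ((hβ m).mul (ih (l + 1)))

theorem sum_expansionCoeff_succ_mul (m : ℕ) (τ : ℂ) (Y : ℕ → ℂ) :
    ∑ l ∈ range (m + 2), expansionCoeff α β e w (m + 1) l τ * Y l
      = α τ * ∑ l ∈ range (m + 1), (deriv (expansionCoeff α β e w m l) τ * Y l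
          + expansionCoeff α β e w m l τ * (e τ * Y (l + 1)))
        + β m τ * ∑ l ∈ range (m + 1), expansionCoeff α β e w m l τ * Y l := by
  set c := expansionCoeff α β e w
  have hc0 : c (m + 1) 0 = α * deriv (c m 0) + β m * c m 0 := rfl
  have hcs : ∀ l, c (m + 1) (l + 1)
      = α * (deriv (c m (l + 1)) + e * c m l) + β m * c m (l + 1) := fun _ => rfl
  have hlast : c m (m + 1) = 0 := expansionCoeff_eq_zero_of_lt (lt_add_one m)
  have hshift : ∑ l ∈ range (m + 1), (α τ * deriv (c m l) τ + β m τ * c m l τ) * Y l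
      = ∑ l ∈ range (m + 1), (α τ * deriv (c m (l + 1)) τ + β m τ * c m (l + 1) τ) * Y (l + 1)
        + (α τ * deriv (c m 0) τ + β m τ * c m 0 τ) * Y 0 := by
    rw [← sum_range_succ' (fun l => (α τ * deriv (c m l) τ + β m τ * c m l τ) * Y l),
      sum_range_succ _ (m + 1), hlast]
    simp
  rw [sum_range_succ' _ (m + 1)]
  simp only [hc0, hcs, Pi.add_apply, Pi.mul_apply]
  rw [mul_sum, mul_sum, ← sum_add_distrib]
  calc _ = ∑ l ∈ range (m + 1), (α τ * deriv (c m (l + 1)) τ + β m τ * c m (l + 1) τ) * Y (l + 1)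
        + ∑ l ∈ range (m + 1), α τ * e τ * c m l τ * Y (l + 1)
        + (α τ * deriv (c m 0) τ + β m τ * c m 0 τ) * Y 0 := by
        rw [← sum_add_distrib]
        exact congrArg (· + _) (sum_congr rfl fun l _ => by ring)
    _ = _ := by
        rw [add_right_comm, ← hshift, ← sum_add_distrib]
        exact sum_congr rfl fun l _ => by ring

theorem eqOn_sum_expansionCoeff (hU : IsOpen U) (hα : DifferentiableOn ℂ α U)
    (hβ : ∀ m, DifferentiableOn ℂ (β m) U) (he : DifferentiableOn ℂ e U)
    (hw : DifferentiableOn ℂ w U) {X H : ℕ → ℂ → ℂ} (hX : ∀ l, DifferentiableOn ℂ (X l) U)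
    (hXd : ∀ l, EqOn (deriv (X l)) (e * X (l + 1)) U) (hH0 : EqOn (H 0) (w * X 0) U)
    (hH : ∀ m, EqOn (H (m + 1)) (α * deriv (H m) + β m * H m) U) (m : ℕ) :
    EqOn (H m) (fun τ => ∑ l ∈ range (m + 1), expansionCoeff α β e w m l τ * X l τ) U := by
  induction m with
  | zero => intro τ hτ; simp [expansionCoeff, hH0 hτ]
  | succ m ih =>
    intro τ hτ
    have hτU := hU.mem_nhds hτ
    have hder : deriv (H m) τ = ∑ l ∈ range (m + 1), (deriv (expansionCoeff α β e w m l) τ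
        * X l τ + expansionCoeff α β e w m l τ * (e τ * X (l + 1) τ)) := by
      rw [(ih.eventuallyEq_of_mem hτU).deriv_eq]
      refine (HasDerivAt.fun_sum fun l _ => ?_).deriv
      have hXl := ((hX l).differentiableAt hτU).hasDerivAt
      rw [hXd l hτ] at hXl
      exact ((differentiableOn_expansionCoeff hU hα hβ he hw m l).differentiableAt
        hτU).hasDerivAt.mul hXl
    rw [hH m hτ]
    dsimp only [Pi.add_apply, Pi.mul_apply]
    rw [sum_expansionCoeff_succ_mul m τ (X · τ), hder, ih hτ]

theorem det_eq_of_triangular_recursion (hU : IsOpen U) (hα : DifferentiableOn ℂ α U)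
    (hβ : ∀ m, DifferentiableOn ℂ (β m) U) (he : DifferentiableOn ℂ e U)
    (hw : DifferentiableOn ℂ w U) {n : ℕ} {X H : Fin n → ℕ → ℂ → ℂ}
    (hX : ∀ i l, DifferentiableOn ℂ (X i l) U)
    (hXd : ∀ i l, EqOn (deriv (X i l)) (e * X i (l + 1)) U)
    (hH0 : ∀ i, EqOn (H i 0) (w * X i 0) U)
    (hH : ∀ i m, EqOn (H i (m + 1)) (α * deriv (H i m) + β m * H i m) U) {τ : ℂ} (hτ : τ ∈ U) :
    (Matrix.of fun i (m : Fin n) => H i m τ).det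
      = (α τ * e τ) ^ n.choose 2 * w τ ^ n * (Matrix.of fun i (l : Fin n) => X i l τ).det := by
  rw [Matrix.det_eq_det_mul_prod_of_triangular_expansion (Matrix.of fun i (m : Fin n) => H i m τ)
    (fun i l => X i l τ)
    (fun m l => expansionCoeff α β e w m l τ)
    (fun m l h => by rw [expansionCoeff_eq_zero_of_lt h]; rfl)
    (fun i m => eqOn_sum_expansionCoeff hU hα hβ he hw (hX i) (hXd i) (hH0 i) (hH i) m hτ)]
  simp only [expansionCoeff_self, Pi.mul_apply, Pi.pow_apply,
    Fin.prod_pow_mul_eq_pow_choose_two_mul_pow]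
  ring

end TriangularExpansion

theorem DifferentiableOn.iterate_deriv {U : Set ℂ} {f : ℂ → ℂ} (hf : DifferentiableOn ℂ f U)
    (hU : IsOpen U) (l : ℕ) : DifferentiableOn ℂ (_root_.deriv^[l] f) U := by
  induction l with
  | zero => exact hf
  | succ l ih => rw [Function.iterate_succ_apply']; exact ih.deriv hU

noncomputable def wronskian {n : ℕ} (F : Fin n → ℂ → ℂ) (τ : ℂ) : ℂ :=
  (Matrix.of fun i l : Fin n => deriv^[l] (F i) τ).det

section Wronskian

variable {U : Set ℂ} {n : ℕ}

theorem differentiableOn_wronskian (hU : IsOpen U) {F : Fin n → ℂ → ℂ}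
    (hF : ∀ i, DifferentiableOn ℂ (F i) U) : DifferentiableOn ℂ (wronskian F) U := by
  have hentries := fun i (l : Fin n) => (hF i).iterate_deriv hU l
  unfold wronskian
  simp only [Matrix.det_apply, Matrix.of_apply]
  fun_prop

theorem wronskian_of_eqOn_mul (hU : IsOpen U) {w : ℂ → ℂ} {F G : Fin n → ℂ → ℂ}
    (hw : DifferentiableOn ℂ w U) (hG : ∀ i, DifferentiableOn ℂ (G i) U)
    (hF : ∀ i, EqOn (F i) (w * G i) U) {τ : ℂ} (hτ : τ ∈ U) :
    wronskian F τ = w τ ^ n * wronskian G τ := by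
  have h := det_eq_of_triangular_recursion (α := 1) (β := 0) (e := 1) (n := n)
    (X := fun i l => deriv^[l] (G i)) (H := fun i m => deriv^[m] (F i)) hU
    (differentiableOn_const 1) (fun _ => differentiableOn_const 0) (differentiableOn_const 1) hw
    (fun i l => (hG i).iterate_deriv hU l)
    (fun i l τ _ => by simp [Function.iterate_succ_apply'])
    hF (fun i m τ _ => by simp [Function.iterate_succ_apply']) hτ
  simpa [wronskian] using h

theorem wronskian_comp {V : Set ℂ} (hU : IsOpen U) (hV : IsOpen V) {g : ℂ → ℂ}
    {F : Fin n → ℂ → ℂ} (hF : ∀ i, DifferentiableOn ℂ (F i) V) (hg : DifferentiableOn ℂ g U)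
    (hgUV : MapsTo g U V) {τ : ℂ} (hτ : τ ∈ U) :
    wronskian (fun i => F i ∘ g) τ = deriv g τ ^ n.choose 2 * wronskian F (g τ) := by
  have h := det_eq_of_triangular_recursion (α := 1) (β := 0) (e := deriv g) (w := 1) (n := n)
    (X := fun i l => deriv^[l] (F i) ∘ g) (H := fun i m => deriv^[m] (F i ∘ g)) hU
    (differentiableOn_const 1) (fun _ => differentiableOn_const 0) (hg.deriv hU)
    (differentiableOn_const 1) (fun i l => ((hF i).iterate_deriv hV l).comp hg hgUV)
    (fun i l σ hσ => by
      rw [Pi.mul_apply, Function.comp_apply, Function.iterate_succ_apply', mul_comm,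
        deriv_comp σ (((hF i).iterate_deriv hV l).differentiableAt (hV.mem_nhds (hgUV hσ)))
          (hg.differentiableAt (hU.mem_nhds hσ))])
    (fun i σ _ => by simp) (fun i m τ _ => by simp [Function.iterate_succ_apply']) hτ
  simpa [wronskian] using h

theorem wronskian_sum_mul (hU : IsOpen U) (A : Matrix (Fin n) (Fin n) ℂ) {F : Fin n → ℂ → ℂ}
    (hF : ∀ i, DifferentiableOn ℂ (F i) U) {τ : ℂ} (hτ : τ ∈ U) :
    wronskian (fun i τ => ∑ j, A i j * F j τ) τ = A.det * wronskian F τ := by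
  have hsmooth : ∀ j (l : ℕ), ContDiffAt ℂ l (F j) τ := fun j l =>
    ((hF j).contDiffOn hU).contDiffAt (hU.mem_nhds hτ)
  have hentries : (Matrix.of fun i (l : Fin n) => deriv^[l] (fun τ => ∑ j, A i j * F j τ) τ)
      = A * Matrix.of fun j (l : Fin n) => deriv^[l] (F j) τ := by
    ext i l
    simp only [Matrix.of_apply, Matrix.mul_apply, ← iteratedDeriv_eq_iterate]
    rw [iteratedDeriv_fun_sum (f := fun j z => A i j * F j z) fun j _ =>
      contDiffAt_const.mul (hsmooth j l)]
    exact sum_congr rfl fun j _ => iteratedDeriv_const_mul (A i j) (hsmooth j l)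
  rw [wronskian, hentries, Matrix.det_mul, wronskian]

end Wronskian

theorem norm_iterate_deriv_le_of_forall_le {f : ℂ → ℂ} {A C : ℝ}
    (hf : DifferentiableOn ℂ f {z | A ≤ z.im}) (hC : ∀ z : ℂ, A ≤ z.im → ‖f z‖ ≤ C) (l : ℕ)
    {τ : ℂ} (hτ : A + 1 ≤ τ.im) : ‖deriv^[l] f τ‖ ≤ l.factorial * C := by
  have hball : Metric.closedBall τ 1 ⊆ {z | A ≤ z.im} := fun z hz => by
    have hzτ : |(z - τ).im| ≤ 1 := (Complex.abs_im_le_norm _).trans (mem_closedBall_iff_norm.1 hz)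
    rw [Complex.sub_im, abs_le] at hzτ
    show A ≤ z.im
    linarith
  have hdiff : DiffContOnCl ℂ f (Metric.ball τ 1) :=
    (hf.mono (by rwa [closure_ball τ one_ne_zero])).diffContOnCl
  rw [← iteratedDeriv_eq_iterate]
  simpa using Complex.norm_iteratedDeriv_le_of_forall_mem_sphere_norm_le l one_pos hdiff
    fun z hz => hC z (hball (Metric.sphere_subset_closedBall hz))

theorem exists_bound_wronskian {n : ℕ} {F : Fin n → ℂ → ℂ}
    (hF : ∀ i, DifferentiableOn ℂ (F i) upperHalfPlaneSet)
    (hbdd : ∀ i, ∃ C : ℝ, ∀ τ : ℂ, 1 ≤ τ.im → ‖F i τ‖ ≤ C) :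
    ∃ C : ℝ, ∀ τ : ℂ, 2 ≤ τ.im → ‖wronskian F τ‖ ≤ C := by
  choose C hC using hbdd
  obtain ⟨M, hM⟩ :=
    (finite_range fun p : Fin n × Fin n => ((p.2 : ℕ).factorial : ℝ) * C p.1).bddAbove
  refine ⟨n.factorial * M ^ n, fun τ hτ => ?_⟩
  have hentry (i l : Fin n) : ‖deriv^[l] (F i) τ‖ ≤ M :=
    (norm_iterate_deriv_le_of_forall_le
      ((hF i).mono fun z (hz : 1 ≤ z.im) => one_pos.trans_le hz) (hC i) l (by linarith)).trans (hM ⟨(i, l), rfl⟩)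
  simpa [wronskian] using Matrix.det_le (abv := IsAbsoluteValue.toAbsoluteValue (norm : ℂ → ℝ))
    (A := Matrix.of fun i l : Fin n => deriv^[l] (F i) τ) hentry

theorem differentiableOn_E2q : DifferentiableOn ℂ E2q (Metric.ball 0 1) := by
  suffices h : ∀ r : ℝ, 0 ≤ r → r < 1 → DifferentiableOn ℂ
      (fun q => ∑' n : ℕ, ((ArithmeticFunction.sigma 1 (n + 1) : ℕ) : ℂ) * q ^ (n + 1))
      (Metric.ball 0 r) by
    intro q hq
    obtain ⟨r, hqr, hr⟩ := exists_between (mem_ball_zero_iff.1 hq)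
    have hsum := (h r ((norm_nonneg q).trans hqr.le) hr).differentiableAt
      (Metric.isOpen_ball.mem_nhds (mem_ball_zero_iff.2 hqr))
    exact ((differentiableAt_const _).sub
      ((differentiableAt_const _).mul hsum)).differentiableWithinAt
  intro r hr0 hr1
  refine Complex.differentiableOn_tsum_of_summable_norm
    (u := fun n => ((n + 1 : ℕ) : ℝ) ^ 2 * r ^ (n + 1)) ?_
    (fun n => ((differentiable_pow _).const_mul _).differentiableOn) Metric.isOpen_ball ?_
  · exact (summable_nat_add_iff (f := fun n => (n : ℝ) ^ 2 * r ^ n) 1).2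
      (summable_pow_mul_geometric_of_norm_lt_one 2 (by rwa [Real.norm_of_nonneg hr0]))
  · intro n q hq
    rw [norm_mul, norm_pow, Complex.norm_natCast]
    have hσ : ((ArithmeticFunction.sigma 1 (n + 1) : ℕ) : ℝ) ≤ ((n + 1 : ℕ) : ℝ) ^ 2 := by
      exact_mod_cast ArithmeticFunction.sigma_le_pow_succ 1 (n + 1)
    exact mul_le_mul hσ (pow_le_pow_left₀ (norm_nonneg q) (mem_ball_zero_iff.1 hq).le _)
      (by positivity) (by positivity)

theorem differentiableOn_E2tau : DifferentiableOn ℂ E2tau upperHalfPlaneSet :=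
  differentiableOn_E2q.comp (by fun_prop) fun τ hτ =>
    mem_ball_zero_iff.2 (UpperHalfPlane.norm_exp_two_pi_I_lt_one ⟨τ, hτ⟩)

theorem modWronskian_eqOn_mul_wronskian (k : ℤ) {n : ℕ} {F : Fin n → ℂ → ℂ}
    (hF : ∀ i, DifferentiableOn ℂ (F i) upperHalfPlaneSet) :
    EqOn (modWronskian k n F) (fun τ => (2 * Real.pi * Complex.I)⁻¹ ^ n.choose 2 * wronskian F τ)
      upperHalfPlaneSet := by
  intro τ hτ
  have h := det_eq_of_triangular_recursion (α := fun _ => (2 * Real.pi * Complex.I)⁻¹)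
    (β := fun m τ => -(((k + 2 * m : ℤ) : ℂ) / 12 * E2tau τ)) (e := 1) (w := 1) (n := n)
    (X := fun i l => deriv^[l] (F i)) (H := fun i m => iterD k n F m i) isOpen_upperHalfPlaneSet
    (differentiableOn_const _) (fun _ => (differentiableOn_E2tau.const_mul _).neg)
    (differentiableOn_const 1) (differentiableOn_const 1)
    (fun i l => (hF i).iterate_deriv isOpen_upperHalfPlaneSet l)
    (fun i l τ _ => by simp [Function.iterate_succ_apply'])
    (fun i τ _ => by simp [iterD])
    (fun i m τ _ => by simp only [iterD, serreD, Pi.add_apply, Pi.mul_apply]; ring) hτ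
  simpa [modWronskian, wronskian] using h

section SL2

variable (γ : Matrix.SpecialLinearGroup (Fin 2) ℤ)

theorem moeb_eq_coe_smul (τ : UpperHalfPlane) : moeb γ τ = ((γ • τ : UpperHalfPlane) : ℂ) := by
  rw [UpperHalfPlane.specialLinearGroup_apply]
  simp [moeb]

theorem jfac_ne_zero {τ : ℂ} (hτ : 0 < τ.im) : jfac γ τ ≠ 0 := by
  have h : jfac γ τ = UpperHalfPlane.denom γ (⟨τ, hτ⟩ : UpperHalfPlane) := by
    simp [jfac, UpperHalfPlane.denom]
  exact h ▸ UpperHalfPlane.denom_ne_zero _ _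

theorem mapsTo_moeb : MapsTo (moeb γ) upperHalfPlaneSet upperHalfPlaneSet := fun τ hτ =>
  moeb_eq_coe_smul γ ⟨τ, hτ⟩ ▸ (γ • (⟨τ, hτ⟩ : UpperHalfPlane)).im_pos

theorem hasDerivAt_moeb {τ : ℂ} (hτ : 0 < τ.im) : HasDerivAt (moeb γ) (jfac γ τ ^ 2)⁻¹ τ := by
  have hdet : (γ 0 0 : ℂ) * γ 1 1 - γ 0 1 * γ 1 0 = 1 := by
    exact_mod_cast (Matrix.det_fin_two (γ : Matrix (Fin 2) (Fin 2) ℤ)).symm.trans γ.2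
  have hj := jfac_ne_zero γ hτ
  have h := (((hasDerivAt_id τ).const_mul (γ 0 0 : ℂ)).add_const (γ 0 1 : ℂ)).div
    (((hasDerivAt_id τ).const_mul (γ 1 0 : ℂ)).add_const (γ 1 1 : ℂ)) hj
  refine h.congr_deriv ?_
  simp only [jfac, id, mul_one] at hj ⊢
  field_simp
  linear_combination hdet

theorem differentiableOn_moeb : DifferentiableOn ℂ (moeb γ) upperHalfPlaneSet := fun _ hτ =>
  (hasDerivAt_moeb γ hτ).differentiableAt.differentiableWithinAt

end SL2

theorem two_mul_natCast_choose_two (n : ℕ) : (2 * n.choose 2 : ℤ) = n * (n - 1) := by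
  have h : ((2 * n.choose 2 : ℤ) : ℚ) = ((n * (n - 1) : ℤ) : ℚ) := by
    push_cast [Nat.cast_choose_two]
    ring
  exact_mod_cast h

theorem wronskian_moeb {n : ℕ} {k : ℤ}
    (ρ : Matrix.SpecialLinearGroup (Fin 2) ℤ →* Matrix.GeneralLinearGroup (Fin n) ℂ)
    (hdet : ∀ γ, Matrix.det ((ρ γ : Matrix (Fin n) (Fin n) ℂ)) = 1) {F : Fin n → ℂ → ℂ}
    (hF : ∀ i, DifferentiableOn ℂ (F i) upperHalfPlaneSet)
    (htrans : ∀ γ : Matrix.SpecialLinearGroup (Fin 2) ℤ, ∀ τ : ℂ, 0 < τ.im → ∀ i,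
      F i (moeb γ τ) = jfac γ τ ^ k * ∑ j, ((ρ γ : Matrix (Fin n) (Fin n) ℂ) i j) * F j τ)
    (γ : Matrix.SpecialLinearGroup (Fin 2) ℤ) {τ : ℂ} (hτ : 0 < τ.im) :
    wronskian F (moeb γ τ) = jfac γ τ ^ ((n : ℤ) * (n + k - 1)) * wronskian F τ := by
  have hU := isOpen_upperHalfPlaneSet
  have hj := jfac_ne_zero γ hτ
  have hcomp := wronskian_comp hU hU hF (differentiableOn_moeb γ) (mapsTo_moeb γ) hτ
  have hmul := wronskian_of_eqOn_mul hU (w := fun σ => jfac γ σ ^ k)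
    (F := fun i => F i ∘ moeb γ)
    (fun σ hσ => (((differentiableAt_id.const_mul _).add_const _).zpow
      (Or.inl (jfac_ne_zero γ hσ))).differentiableWithinAt)
    (fun i => DifferentiableOn.fun_sum fun j _ => (hF j).const_mul _)
    (fun i σ hσ => htrans γ σ hσ i) hτ
  rw [wronskian_sum_mul hU _ hF hτ, hdet, one_mul, hcomp, (hasDerivAt_moeb γ hτ).deriv] at hmul
  have hexp : jfac γ τ ^ ((n : ℤ) * (n + k - 1))
      = (jfac γ τ ^ 2) ^ n.choose 2 * (jfac γ τ ^ k) ^ n := by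
    rw [← pow_mul, ← zpow_natCast, ← zpow_natCast, ← _root_.zpow_mul, ← zpow_add₀ hj]
    congr 1
    push_cast
    linear_combination -two_mul_natCast_choose_two n
  rw [hexp, mul_assoc, ← hmul, ← mul_assoc, ← mul_pow, mul_inv_cancel₀ (pow_ne_zero 2 hj),
    one_pow, one_mul]

theorem modular_wronskian_is_modular_form_general
    (n : ℕ) (k : ℤ)
    (ρ : Matrix.SpecialLinearGroup (Fin 2) ℤ →* Matrix.GeneralLinearGroup (Fin n) ℂ)
    (hdet : ∀ γ, Matrix.det ((ρ γ : Matrix (Fin n) (Fin n) ℂ)) = 1)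
    (F : Fin n → ℂ → ℂ)
    (hhol : ∀ i, DifferentiableOn ℂ (F i) {τ : ℂ | 0 < τ.im})
    (htrans : ∀ γ : Matrix.SpecialLinearGroup (Fin 2) ℤ, ∀ τ : ℂ, 0 < τ.im → ∀ i,
      F i (moeb (γ : Matrix (Fin 2) (Fin 2) ℤ) τ)
        = jfac (γ : Matrix (Fin 2) (Fin 2) ℤ) τ ^ k *
            ∑ j, ((ρ γ : Matrix (Fin n) (Fin n) ℂ) i j) * F j τ)
    (hbdd : ∀ i, ∃ C : ℝ, ∀ τ : ℂ, 1 ≤ τ.im → ‖F i τ‖ ≤ C) :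
    (∀ γ : Matrix.SpecialLinearGroup (Fin 2) ℤ, ∀ τ : ℂ, 0 < τ.im →
      modWronskian k n F (moeb (γ : Matrix (Fin 2) (Fin 2) ℤ) τ)
        = jfac (γ : Matrix (Fin 2) (Fin 2) ℤ) τ ^ ((n : ℤ) * ((n : ℤ) + k - 1)) *
            modWronskian k n F τ) ∧
    DifferentiableOn ℂ (modWronskian k n F) {τ : ℂ | 0 < τ.im} ∧
    ∃ C A : ℝ, ∀ τ : ℂ, A ≤ τ.im → ‖modWronskian k n F τ‖ ≤ C := by
  have hW := modWronskian_eqOn_mul_wronskian k hhol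
  refine ⟨fun γ τ hτ => ?_, ?_, ?_⟩
  · rw [hW (mapsTo_moeb γ hτ), hW hτ]
    dsimp only
    rw [wronskian_moeb ρ hdet hhol htrans γ hτ]
    ring
  · exact ((differentiableOn_wronskian isOpen_upperHalfPlaneSet hhol).const_mul _).congr hW
  · obtain ⟨C, hC⟩ := exists_bound_wronskian hhol hbdd
    refine ⟨‖(2 * Real.pi * Complex.I)⁻¹ ^ n.choose 2‖ * C, 2, fun τ hτ => ?_⟩
    rw [hW (show 0 < τ.im by linarith), norm_mul]
    exact mul_le_mul_of_nonneg_left (hC τ hτ) (norm_nonneg _)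

/-- If `F` is a holomorphic vector-valued modular form of weight `k` for a representation
`ρ` of `SL₂(ℤ)` with `ρ(T)` unitarizable and `det ρ` trivial, holomorphic at infinity, and
with nonzero modular Wronskian `W(F)`, then `W(F)` is a holomorphic scalar modular form for
`SL₂(ℤ)` of weight `n(n+k−1)`: it transforms with weight `n(n+k−1)`, is holomorphic on the
upper half-plane, and is bounded at infinity. -/
theorem modular_wronskian_is_modular_form
    (n : ℕ) (hn : 0 < n) (k : ℤ)
    (ρ : Matrix.SpecialLinearGroup (Fin 2) ℤ →* Matrix.GeneralLinearGroup (Fin n) ℂ)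
    (hdet : ∀ γ, Matrix.det ((ρ γ : Matrix (Fin n) (Fin n) ℂ)) = 1)
    (hunitT : ∃ u : Matrix (Fin n) (Fin n) ℂ, IsUnit u ∧
      u * (ρ ModularGroup.T : Matrix (Fin n) (Fin n) ℂ) * u⁻¹
        ∈ Matrix.unitaryGroup (Fin n) ℂ)
    (F : Fin n → ℂ → ℂ)
    (hhol : ∀ i, DifferentiableOn ℂ (F i) {τ : ℂ | 0 < τ.im})
    (htrans : ∀ γ : Matrix.SpecialLinearGroup (Fin 2) ℤ, ∀ τ : ℂ, 0 < τ.im → ∀ i,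
      F i (moeb (γ : Matrix (Fin 2) (Fin 2) ℤ) τ)
        = jfac (γ : Matrix (Fin 2) (Fin 2) ℤ) τ ^ k *
            ∑ j, ((ρ γ : Matrix (Fin n) (Fin n) ℂ) i j) * F j τ)
    (hbdd : ∀ i, ∃ C : ℝ, ∀ τ : ℂ, 1 ≤ τ.im → ‖F i τ‖ ≤ C)
    (hW : ∃ τ : ℂ, 0 < τ.im ∧ modWronskian k n F τ ≠ 0) :
    (∀ γ : Matrix.SpecialLinearGroup (Fin 2) ℤ, ∀ τ : ℂ, 0 < τ.im →
      modWronskian k n F (moeb (γ : Matrix (Fin 2) (Fin 2) ℤ) τ)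
        = jfac (γ : Matrix (Fin 2) (Fin 2) ℤ) τ ^ ((n : ℤ) * ((n : ℤ) + k - 1)) *
            modWronskian k n F τ) ∧
    DifferentiableOn ℂ (modWronskian k n F) {τ : ℂ | 0 < τ.im} ∧
    ∃ C A : ℝ, ∀ τ : ℂ, A ≤ τ.im → ‖modWronskian k n F τ‖ ≤ C :=
  modular_wronskian_is_modular_form_general n k ρ hdet F hhol htrans hbdd
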